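/- Let π₀ be a flow on a locally compact metric space X, B a compact stable isolating block for π₀, N = ℝ × B, π the product flow on ℝ × X, and (π_n) a sequence of skew product flows on ℝ × X converging semi-singularly to π₀. Let T > 0 and n be such that Γ^T_{π_n}(N) = ∅ and G^T_{π_n}(N) ≠ ∅, and let δ > 0 be such that cl U_δ(B) is compact, U_δ(G^{2T}_π(N)) ⊆ G^T_π(N), U_δ(G^T_π(N)) ⊆ N and U_δ(G^T_π(U_δ(N))) ⊆ N. If d(xπ_n t, xπt) < δ/3 for all t ∈ [−T,T] and all x ∈ ℝ × cl U_δ(B), then A_{π_n}(N) is a nonempty isolated invariant set of π_n (A_{π_n}(N) ⊆ int N), every t-slice A_{π_n}(N) ∩ ({t} × X) is nonempty and compact, and there exists ε > 0, depending only on π₀, B, T and δ, such that U_ε(A_{π_n}(N)) ⊆ G^T_{π_n}(N). -/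

import Mathlib

open Set Metric Filter Topology

/-- A (global) flow on a metric space: jointly continuous, identity at time `0`,
and `zρ(s+t) = (zρt)ρs` for all `s t : ℝ`. -/
def IsFlow {Z : Type*} [MetricSpace Z] (ρ : ℝ → Z → Z) : Prop :=
  Continuous (fun p : ℝ × Z => ρ p.1 p.2) ∧ (∀ z, ρ 0 z = z) ∧
    ∀ (s t : ℝ) (z : Z), ρ (s + t) z = ρ s (ρ t z)

/-- `G^T_ρ(Y) = {z : zρt ∈ cl Y for all t ∈ [−T,T]}`. -/
def Gset {Z : Type*} [MetricSpace Z] (ρ : ℝ → Z → Z) (T : ℝ) (Y : Set Z) : Set Z :=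
  {z | ∀ t ∈ Set.Icc (-T) T, ρ t z ∈ closure Y}

/-- `Γ^T_ρ(Y) = {z ∈ G^T_ρ(Y) : zρt ∈ ∂Y for some t ∈ [0,T]}`. -/
def GammaSet {Z : Type*} [MetricSpace Z] (ρ : ℝ → Z → Z) (T : ℝ) (Y : Set Z) : Set Z :=
  {z ∈ Gset ρ T Y | ∃ t ∈ Set.Icc (0:ℝ) T, ρ t z ∈ frontier Y}

/-- `A⁺_ρ(Y) = {z ∈ Y : zρt ∈ Y for all t ≥ 0}`. -/
def Aplus {Z : Type*} [MetricSpace Z] (ρ : ℝ → Z → Z) (Y : Set Z) : Set Z :=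
  {z ∈ Y | ∀ t : ℝ, 0 ≤ t → ρ t z ∈ Y}

/-- `A⁻_ρ(Y) = {z ∈ Y : zρ(−t) ∈ Y for all t ≥ 0}`. -/
def Aminus {Z : Type*} [MetricSpace Z] (ρ : ℝ → Z → Z) (Y : Set Z) : Set Z :=
  {z ∈ Y | ∀ t : ℝ, 0 ≤ t → ρ (-t) z ∈ Y}

/-- `A_ρ(Y) = A⁺_ρ(Y) ∩ A⁻_ρ(Y)`. -/
def Ainv {Z : Type*} [MetricSpace Z] (ρ : ℝ → Z → Z) (Y : Set Z) : Set Z :=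
  Aplus ρ Y ∩ Aminus ρ Y

/-- The family `𝓕` of sets `N` with nonempty interior such that `G^T(N) ⊆ int N`
for some `T > 0`. -/
def calF {Z : Type*} [MetricSpace Z] (ρ : ℝ → Z → Z) : Set (Set Z) :=
  {N | (interior N).Nonempty ∧ ∃ T > 0, Gset ρ T N ⊆ interior N}

/-- The product flow of `π₀` on `ℝ × X`: `(s,x)πt = (s+t, xπ₀t)`. -/
def prodFlow {X : Type*} [MetricSpace X] (π₀ : ℝ → X → X) : ℝ → ℝ × X → ℝ × X :=
  fun t p => (p.1 + t, π₀ t p.2)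

/-- A flow on `ℝ × X` is a skew product flow if `P₁((s,x)πt) = s + t`. -/
def IsSkewFlow {X : Type*} [MetricSpace X] (σ : ℝ → ℝ × X → ℝ × X) : Prop :=
  ∀ (t s : ℝ) (x : X), (σ t (s, x)).1 = s + t

/-- Semi-singular convergence of a sequence of flows on `ℝ × X` to a flow on `X`:
for every sequence `(s_n)` in `ℝ` and all sequences `x_n → x₀`, `t_n → t₀ ∈ [0,∞)`,
`P₂((s_n,x_n) π_n t_n) → x₀ π₀ t₀`. -/
def SemiSingConv {X : Type*} [MetricSpace X]
    (πn : ℕ → ℝ → ℝ × X → ℝ × X) (π₀ : ℝ → X → X) : Prop :=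
  ∀ (s : ℕ → ℝ) (x : ℕ → X) (x₀ : X) (t : ℕ → ℝ) (t₀ : ℝ),
    Filter.Tendsto x Filter.atTop (nhds x₀) → (∀ n, 0 ≤ t n) →
    Filter.Tendsto t Filter.atTop (nhds t₀) →
    Filter.Tendsto (fun n => (πn n (t n) (s n, x n)).2) Filter.atTop (nhds (π₀ t₀ x₀))

/-- `B` is a stable isolating block for the flow `ρ`: a closed isolating neighborhood
which is positively invariant and such that each boundary point immediately leaves `B`
in backward time and immediately enters `int B` in forward time. -/
def IsStableIsolatingBlock {Z : Type*} [MetricSpace Z] (ρ : ℝ → Z → Z) (B : Set Z) : Prop :=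
  IsClosed B ∧ Ainv ρ B ⊆ interior B ∧ Aplus ρ B = B ∧
    ∀ z ∈ frontier B, ∃ ε > 0, ∀ t ∈ Set.Ioo (0:ℝ) ε, ρ (-t) z ∉ B ∧ ρ t z ∈ interior B

/-!
Since `Γ^T_{π_n}(N) = ∅`, an orbit of `π_n` that has stayed in `N` for a time `2T` can never reach
`∂N` afterwards, so points of `G^T_{π_n}(N)` stay in `N` in forward time. An `ω`-limit point `x`
of the compact positively invariant block `B` has its whole `π₀`-orbit in `B`; closeness of `π_n`
to `π` and `U_δ(G^{2T}_π(N)) ⊆ G^T_π(N)` put every `(s, x)` in `G^T_{π_n}(N)`, and compactness of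
`{0} × B` then yields a full `π_n`-orbit in `N`. The radius `ε` comes from uniform continuity of
`π₀` on `[-T, T] × cl U_δ(B)`, which with two `δ/3` closeness estimates keeps `π_n`-orbits starting
`ε`-close to `A_{π_n}(N)` within `δ` of `G^T_π(U_δ(N))`.
-/

/-- `τ` is the first time `≥ c` at which `f` leaves `interior Y`. -/
lemma exists_mem_frontier_of_notMem {Z : Type*} [MetricSpace Z] {f : ℝ → Z} (hf : Continuous f)
    {Y : Set Z} (hY : IsClosed Y) {a b c : ℝ} (hac : a ≤ c) (hcb : c ≤ b)
    (hac_mem : ∀ t ∈ Icc a c, f t ∈ Y) (hb : f b ∉ Y) :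
    ∃ τ ∈ Icc c b, f τ ∈ frontier Y ∧ ∀ t ∈ Icc a τ, f t ∈ Y := by
  set S := Icc c b ∩ f ⁻¹' (interior Y)ᶜ
  have hS : IsClosed S := isClosed_Icc.inter (isOpen_interior.isClosed_compl.preimage hf)
  have hτS : sInf S ∈ S := hS.csInf_mem ⟨b, ⟨hcb, le_rfl⟩, fun h => hb (interior_subset h)⟩
    (bddBelow_Icc.mono inter_subset_left)
  set τ := sInf S
  have hbefore : ∀ t ∈ Ico c τ, f t ∈ Y := fun t ht => by
    by_contra hft
    have htS : t ∈ S := ⟨⟨ht.1, ht.2.le.trans hτS.1.2⟩, fun h => hft (interior_subset h)⟩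
    exact (csInf_le (bddBelow_Icc.mono inter_subset_left) htS).not_gt ht.2
  have hτY : f τ ∈ Y := by
    rcases hτS.1.1.eq_or_lt with hcτ | hcτ
    · exact hcτ ▸ hac_mem c ⟨hac, le_rfl⟩
    · have : Icc c τ ⊆ f ⁻¹' Y := closure_Ico hcτ.ne ▸ (hY.preimage hf).closure_subset_iff.2 hbefore
      exact this ⟨hcτ.le, le_rfl⟩
  refine ⟨τ, hτS.1, by rw [hY.frontier_eq]; exact ⟨hτY, hτS.2⟩, fun t ht => ?_⟩
  rcases le_or_gt t c with htc | htc
  · exact hac_mem t ⟨ht.1, htc⟩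
  · rcases ht.2.lt_or_eq with htτ | rfl
    · exact hbefore t ⟨htc.le, htτ⟩
    · exact hτY

namespace IsFlow

variable {Z : Type*} [MetricSpace Z] {ρ : ℝ → Z → Z} {Y : Set Z} {T : ℝ}

lemma continuous_orbit (hρ : IsFlow ρ) (z : Z) : Continuous fun t => ρ t z :=
  hρ.1.comp (continuous_id.prodMk continuous_const)

lemma continuous_timeMap (hρ : IsFlow ρ) (t : ℝ) : Continuous (ρ t) :=
  hρ.1.comp (continuous_const.prodMk continuous_id)

lemma map_map (hρ : IsFlow ρ) (s t : ℝ) (z : Z) : ρ s (ρ t z) = ρ (s + t) z :=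
  (hρ.2.2 s t z).symm

lemma mem_Ainv_iff (hρ : IsFlow ρ) {z : Z} : z ∈ Ainv ρ Y ↔ ∀ t, ρ t z ∈ Y := by
  refine ⟨fun ⟨⟨_, hfwd⟩, ⟨_, hbwd⟩⟩ t => ?_, fun h => ?_⟩
  · rcases le_total 0 t with ht | ht
    · exact hfwd t ht
    · simpa using hbwd (-t) (neg_nonneg.2 ht)
  · have hz : z ∈ Y := hρ.2.1 z ▸ h 0
    exact ⟨⟨hz, fun t _ => h t⟩, ⟨hz, fun t _ => h (-t)⟩⟩

lemma isClosed_Ainv (hρ : IsFlow ρ) (hY : IsClosed Y) : IsClosed (Ainv ρ Y) := by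
  have : Ainv ρ Y = ⋂ t, ρ t ⁻¹' Y := by ext z; simp [hρ.mem_Ainv_iff]
  exact this ▸ isClosed_iInter fun t => hY.preimage (hρ.continuous_timeMap t)

lemma mapsTo_Ainv (hρ : IsFlow ρ) (t : ℝ) : MapsTo (ρ t) (Ainv ρ Y) (Ainv ρ Y) :=
  fun _ hz => hρ.mem_Ainv_iff.2 fun s => hρ.map_map s t _ ▸ hρ.mem_Ainv_iff.1 hz (s + t)

lemma Ainv_Ainv (hρ : IsFlow ρ) : Ainv ρ (Ainv ρ Y) = Ainv ρ Y :=
  Subset.antisymm (fun _ hz => hz.1.1) fun _ hz => hρ.mem_Ainv_iff.2 fun t => hρ.mapsTo_Ainv t hz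

lemma Ainv_subset_Gset (hρ : IsFlow ρ) : Ainv ρ Y ⊆ Gset ρ T Y :=
  fun _ hz t _ => subset_closure (hρ.mem_Ainv_iff.1 hz t)

lemma Gset_subset (hρ : IsFlow ρ) (hY : IsClosed Y) (hT : 0 ≤ T) : Gset ρ T Y ⊆ Y := by
  intro z hz
  simpa [hρ.2.1, hY.closure_eq] using hz 0 ⟨neg_nonpos.2 hT, hT⟩

lemma Ainv_subset_interior (hρ : IsFlow ρ) (hY : IsClosed Y) (hT : 0 ≤ T)
    (hΓ : GammaSet ρ T Y = ∅) : Ainv ρ Y ⊆ interior Y := by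
  intro z hz
  by_contra hint
  have hzΓ : z ∈ GammaSet ρ T Y :=
    ⟨hρ.Ainv_subset_Gset hz, 0, ⟨le_rfl, hT⟩, by
      rw [hρ.2.1, hY.frontier_eq]; exact ⟨hz.1.1, hint⟩⟩
  simp [hΓ] at hzΓ

/-- A first exit after time `T` would produce a point of `Γ^T(Y)`, namely `zρ(τ - T)` where `τ`
is the first frontier time. -/
lemma mem_of_mem_Gset (hρ : IsFlow ρ) (hY : IsClosed Y) (hT : 0 ≤ T) (hΓ : GammaSet ρ T Y = ∅)
    {z : Z} (hz : z ∈ Gset ρ T Y) {t : ℝ} (ht : -T ≤ t) : ρ t z ∈ Y := by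
  have hzY : ∀ s ∈ Icc (-T) T, ρ s z ∈ Y := fun s hs => hY.closure_eq ▸ hz s hs
  by_contra hout
  have hTt : T ≤ t := le_of_not_gt fun htT => hout (hzY t ⟨ht, htT.le⟩)
  obtain ⟨τ, hτ, hfr, hbefore⟩ :=
    exists_mem_frontier_of_notMem (hρ.continuous_orbit z) hY (by linarith) hTt hzY hout
  have hG : ρ (τ - T) z ∈ Gset ρ T Y := fun u hu => by
    rw [hρ.map_map]
    exact subset_closure (hbefore _ ⟨by linarith [hu.1, hτ.1], by linarith [hu.2]⟩)
  have hΓmem : ρ (τ - T) z ∈ GammaSet ρ T Y :=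
    ⟨hG, T, ⟨hT, le_rfl⟩, by rwa [hρ.map_map, add_sub_cancel]⟩
  simp [hΓ] at hΓmem

/-- The full orbit is found through an `ω`-limit point of a forward orbit. -/
lemma Ainv_nonempty_of_isCompact (hρ : IsFlow ρ) (hY : IsCompact Y) (hinv : Aplus ρ Y = Y)
    (hne : Y.Nonempty) : (Ainv ρ Y).Nonempty := by
  obtain ⟨x, hx⟩ := hne
  have hfwd : ∀ t, 0 ≤ t → ρ t x ∈ Y := (hinv.symm ▸ hx : x ∈ Aplus ρ Y).2
  obtain ⟨y, -, φ, hφ, hlim⟩ := hY.tendsto_subseq fun k : ℕ => hfwd k k.cast_nonneg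
  refine ⟨y, hρ.mem_Ainv_iff.2 fun t => hY.isClosed.mem_of_tendsto
    (((hρ.continuous_timeMap t).tendsto y).comp hlim) ?_⟩
  filter_upwards [(tendsto_natCast_atTop_atTop.comp hφ.tendsto_atTop).eventually_ge_atTop (-t)]
    with k hk
  simp only [Function.comp_apply, hρ.map_map] at hk ⊢
  exact hfwd _ (by linarith)

lemma inter_Ainv_nonempty_of_isCompact (hρ : IsFlow ρ) {K : Set Z} (hK : IsCompact K)
    (hY : IsClosed Y) (h : ∀ m : ℕ, ∃ z ∈ K, ∀ t ∈ Icc (-(m : ℝ)) m, ρ t z ∈ Y) :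
    (K ∩ Ainv ρ Y).Nonempty := by
  set E : ℕ → Set Z := fun m => K ∩ ⋂ t ∈ Icc (-(m : ℝ)) m, ρ t ⁻¹' Y
  have hE : ∀ m, IsClosed (E m) := fun m =>
    hK.isClosed.inter (isClosed_biInter fun t _ => hY.preimage (hρ.continuous_timeMap t))
  have hmono : ∀ m, E (m + 1) ⊆ E m := fun m =>
    inter_subset_inter_right _ (biInter_subset_biInter_left
      (Icc_subset_Icc (by push_cast; linarith) (by push_cast; linarith)))
  have hne : ∀ m, (E m).Nonempty := fun m => by
    obtain ⟨z, hzK, hz⟩ := h m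
    exact ⟨z, hzK, mem_iInter₂.2 hz⟩
  obtain ⟨z, hz⟩ := IsCompact.nonempty_iInter_of_sequence_nonempty_isCompact_isClosed E hmono hne
    (hK.of_isClosed_subset (hE 0) inter_subset_left) hE
  rw [mem_iInter] at hz
  refine ⟨z, (hz 0).1, hρ.mem_Ainv_iff.2 fun t => ?_⟩
  exact mem_iInter₂.1 (hz ⌈|t|⌉₊).2 t (abs_le.1 (Nat.le_ceil |t|))

end IsFlow

section ProductFlow

variable {X : Type*} [MetricSpace X] {π₀ : ℝ → X → X} {B : Set X} {T δ : ℝ}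

lemma isFlow_prodFlow (hπ₀ : IsFlow π₀) : IsFlow (prodFlow π₀) := by
  refine ⟨?_, fun z => by simp [prodFlow, hπ₀.2.1], fun s t z => ?_⟩
  · exact (continuous_snd.fst.add continuous_fst).prodMk
      (hπ₀.1.comp (continuous_fst.prodMk continuous_snd.snd))
  · simp only [prodFlow, hπ₀.map_map, Prod.mk.injEq, and_true]
    ring

lemma IsSkewFlow.fst_apply {σ : ℝ → ℝ × X → ℝ × X} (hσ : IsSkewFlow σ) (t : ℝ) (z : ℝ × X) :
    (σ t z).1 = z.1 + t :=
  hσ t z.1 z.2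

lemma mk_mem_Ainv_prodFlow (hπ₀ : IsFlow π₀) {x : X} (hx : x ∈ Ainv π₀ B) (s : ℝ) :
    (s, x) ∈ Ainv (prodFlow π₀) ((univ : Set ℝ) ×ˢ B) :=
  (isFlow_prodFlow hπ₀).mem_Ainv_iff.2 fun t => ⟨trivial, hπ₀.mem_Ainv_iff.1 hx t⟩

lemma exists_pos_dist_prodFlow_lt (hπ₀ : IsFlow π₀) {K : Set X} (hK : IsCompact K) (T : ℝ)
    {η : ℝ} (hη : 0 < η) :
    ∃ ε > 0, ε ≤ η ∧ ∀ z w : ℝ × X, z.2 ∈ K → w.2 ∈ K → dist z w < ε →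
      ∀ t ∈ Icc (-T) T, dist (prodFlow π₀ t z) (prodFlow π₀ t w) < η := by
  obtain ⟨ε, hε, hUC⟩ := Metric.uniformContinuousOn_iff.1
    ((isCompact_Icc.prod hK).uniformContinuousOn_of_continuous hπ₀.1.continuousOn) η hη
  refine ⟨min ε η, lt_min hε hη, min_le_right _ _, fun z w hz hw hzw t ht => ?_⟩
  rw [Prod.dist_eq, max_lt_iff] at hzw
  refine max_lt ?_ (hUC (t, z.2) ⟨ht, hz⟩ (t, w.2) ⟨ht, hw⟩ ?_)
  · simpa [prodFlow, dist_add_right] using hzw.1.trans_le (min_le_right _ _)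
  · simpa [Prod.dist_eq] using hzw.2.trans_le (min_le_left _ _)

variable {ρ : ℝ → ℝ × X → ℝ × X}

lemma Ainv_subset_Gset_prodFlow_thickening (hρ : IsFlow ρ) (hδ : 0 < δ)
    (hclose : ∀ z ∈ (univ : Set ℝ) ×ˢ closure (thickening δ B),
      ∀ t ∈ Icc (-T) T, dist (ρ t z) (prodFlow π₀ t z) < δ / 3) :
    Ainv ρ ((univ : Set ℝ) ×ˢ B) ⊆ Gset (prodFlow π₀) T (thickening δ ((univ : Set ℝ) ×ˢ B)) := by
  intro w hw s hs
  have hwK : w ∈ (univ : Set ℝ) ×ˢ closure (thickening δ B) :=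
    ⟨trivial, subset_closure (self_subset_thickening hδ B hw.1.1.2)⟩
  refine subset_closure (mem_thickening_iff.2 ⟨ρ s w, hρ.mem_Ainv_iff.1 hw s, ?_⟩)
  rw [dist_comm]
  linarith [hclose w hwK s hs]

lemma exists_pos_thickening_Ainv_subset_Gset (hπ₀ : IsFlow π₀) (hδ : 0 < δ)
    (hcpt : IsCompact (closure (thickening δ B)))
    (h3 : thickening δ (Gset (prodFlow π₀) T (thickening δ ((univ : Set ℝ) ×ˢ B))) ⊆
      (univ : Set ℝ) ×ˢ B) :
    ∃ ε > 0, ∀ ρ : ℝ → ℝ × X → ℝ × X, IsFlow ρ →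
      (∀ z ∈ (univ : Set ℝ) ×ˢ closure (thickening δ B),
        ∀ t ∈ Icc (-T) T, dist (ρ t z) (prodFlow π₀ t z) < δ / 3) →
      thickening ε (Ainv ρ ((univ : Set ℝ) ×ˢ B)) ⊆ Gset ρ T ((univ : Set ℝ) ×ˢ B) := by
  obtain ⟨ε, hε, hεδ, hdist⟩ := exists_pos_dist_prodFlow_lt hπ₀ hcpt T (by positivity : 0 < δ / 3)
  refine ⟨ε, hε, fun ρ hρ hclose z hz t ht => subset_closure (h3 ?_)⟩
  obtain ⟨w, hw, hzw⟩ := mem_thickening_iff.1 hz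
  have hwB : w.2 ∈ B := hw.1.1.2
  have hzwδ : dist z.2 w.2 < δ :=
    (le_max_right _ _).trans_lt (hzw.trans_le (by linarith) : dist z w < δ)
  have hzK : z.2 ∈ closure (thickening δ B) :=
    subset_closure (mem_thickening_iff.2 ⟨w.2, hwB, hzwδ⟩)
  have hwK : w.2 ∈ closure (thickening δ B) := subset_closure (self_subset_thickening hδ B hwB)
  refine mem_thickening_iff.2 ⟨ρ t w,
    Ainv_subset_Gset_prodFlow_thickening hρ hδ hclose (hρ.mapsTo_Ainv t hw), ?_⟩
  calc dist (ρ t z) (ρ t w)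
      ≤ dist (ρ t z) (prodFlow π₀ t z) + dist (prodFlow π₀ t z) (prodFlow π₀ t w) +
          dist (prodFlow π₀ t w) (ρ t w) := dist_triangle4 _ _ _ _
    _ < δ / 3 + δ / 3 + δ / 3 := by
        gcongr
        · exact hclose z ⟨trivial, hzK⟩ t ht
        · exact hdist z w hzK hwK hzw t ht
        · rw [dist_comm]; exact hclose w ⟨trivial, hwK⟩ t ht
    _ = δ := by ring

lemma mk_mem_Gset_of_mem_Ainv (hπ₀ : IsFlow π₀) (hB : IsClosed B) (hT : 0 ≤ T) (hδ : 0 < δ)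
    (h1 : thickening δ (Gset (prodFlow π₀) (2 * T) ((univ : Set ℝ) ×ˢ B)) ⊆
      Gset (prodFlow π₀) T ((univ : Set ℝ) ×ˢ B))
    (hclose : ∀ z ∈ (univ : Set ℝ) ×ˢ closure (thickening δ B),
      ∀ t ∈ Icc (-T) T, dist (ρ t z) (prodFlow π₀ t z) < δ / 3)
    {x : X} (hx : x ∈ Ainv π₀ B) (s : ℝ) : (s, x) ∈ Gset ρ T ((univ : Set ℝ) ×ˢ B) := by
  have hπ := isFlow_prodFlow hπ₀
  intro t ht
  have hxK : (s, x) ∈ (univ : Set ℝ) ×ˢ closure (thickening δ B) :=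
    ⟨trivial, subset_closure (self_subset_thickening hδ B hx.1.1)⟩
  have hπt : prodFlow π₀ t (s, x) ∈ Gset (prodFlow π₀) (2 * T) ((univ : Set ℝ) ×ˢ B) :=
    hπ.Ainv_subset_Gset (hπ.mapsTo_Ainv t (mk_mem_Ainv_prodFlow hπ₀ hx s))
  refine subset_closure (hπ.Gset_subset (isClosed_univ.prod hB) hT (h1 ?_))
  exact mem_thickening_iff.2 ⟨_, hπt, by linarith [hclose _ hxK t ht]⟩

end ProductFlow

theorem stmt9_general {X : Type*} [MetricSpace X]
    (π₀ : ℝ → X → X) (hπ₀ : IsFlow π₀) (B : Set X) (hBcpt : IsCompact B)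
    (hB : IsStableIsolatingBlock π₀ B)
    (πn : ℕ → ℝ → ℝ × X → ℝ × X) (hflow : ∀ n, IsFlow (πn n))
    (hskew : ∀ n, IsSkewFlow (πn n))
    (T δ : ℝ) (hT : 0 < T) (hδ : 0 < δ)
    (hcpt : IsCompact (closure (Metric.thickening δ B)))
    (h1 : Metric.thickening δ (Gset (prodFlow π₀) (2 * T) ((Set.univ : Set ℝ) ×ˢ B)) ⊆
      Gset (prodFlow π₀) T ((Set.univ : Set ℝ) ×ˢ B))
    (h3 : Metric.thickening δ
        (Gset (prodFlow π₀) T (Metric.thickening δ ((Set.univ : Set ℝ) ×ˢ B))) ⊆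
      (Set.univ : Set ℝ) ×ˢ B) :
    ∃ ε > (0:ℝ), ∀ n : ℕ,
      GammaSet (πn n) T ((Set.univ : Set ℝ) ×ˢ B) = ∅ →
      (Gset (πn n) T ((Set.univ : Set ℝ) ×ˢ B)).Nonempty →
      (∀ z ∈ (Set.univ : Set ℝ) ×ˢ closure (Metric.thickening δ B),
        ∀ t ∈ Set.Icc (-T) T, dist (πn n t z) (prodFlow π₀ t z) < δ / 3) →
      (Ainv (πn n) ((Set.univ : Set ℝ) ×ˢ B)).Nonempty ∧
      Ainv (πn n) ((Set.univ : Set ℝ) ×ˢ B) ⊆ interior ((Set.univ : Set ℝ) ×ˢ B) ∧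
      Ainv (πn n) ((Set.univ : Set ℝ) ×ˢ B) =
        Ainv (πn n) (Ainv (πn n) ((Set.univ : Set ℝ) ×ˢ B)) ∧
      (∀ t : ℝ,
        (Ainv (πn n) ((Set.univ : Set ℝ) ×ˢ B) ∩ ({t} : Set ℝ) ×ˢ (Set.univ : Set X)).Nonempty ∧
        IsCompact (Ainv (πn n) ((Set.univ : Set ℝ) ×ˢ B) ∩ ({t} : Set ℝ) ×ˢ (Set.univ : Set X))) ∧
      Metric.thickening ε (Ainv (πn n) ((Set.univ : Set ℝ) ×ˢ B)) ⊆
        Gset (πn n) T ((Set.univ : Set ℝ) ×ˢ B) := by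
  have hN : IsClosed ((univ : Set ℝ) ×ˢ B) := isClosed_univ.prod hBcpt.isClosed
  obtain ⟨ε, hε, hεG⟩ := exists_pos_thickening_Ainv_subset_Gset hπ₀ hδ hcpt h3
  refine ⟨ε, hε, fun n hΓ ⟨z, hz⟩ hclose => ?_⟩
  have hρ := hflow n
  obtain ⟨x, hx⟩ := hπ₀.Ainv_nonempty_of_isCompact hBcpt hB.2.2.1
    ⟨z.2, (hρ.Gset_subset hN hT.le hz).2⟩
  have hfwd (s t : ℝ) (ht : -T ≤ t) : πn n t (s, x) ∈ (univ : Set ℝ) ×ˢ B :=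
    hρ.mem_of_mem_Gset hN hT.le hΓ
      (mk_mem_Gset_of_mem_Ainv hπ₀ hBcpt.isClosed hT.le hδ h1 hclose hx s) ht
  -- Following `(-m, x)` for time `m` lands in the slice `{0} × B` with orbit in `N` on `[-m, m]`.
  obtain ⟨w, -, hw⟩ := hρ.inter_Ainv_nonempty_of_isCompact
    ((isCompact_singleton (x := (0 : ℝ))).prod hBcpt) hN
    fun m => ⟨πn n m (-m, x), ⟨by simp [(hskew n).fst_apply], (hfwd _ _ (by linarith)).2⟩,
      fun t ht => hρ.map_map t m _ ▸ hfwd _ _ (by linarith [ht.1])⟩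
  refine ⟨⟨w, hw⟩, hρ.Ainv_subset_interior hN hT.le hΓ, hρ.Ainv_Ainv.symm, fun t => ⟨?_, ?_⟩,
    hεG _ hρ hclose⟩
  · exact ⟨_, hρ.mapsTo_Ainv (t - w.1) hw, by simp [(hskew n).fst_apply], trivial⟩
  · refine ((isCompact_singleton (x := t)).prod hBcpt).of_isClosed_subset
      ((hρ.isClosed_Ainv hN).inter (isClosed_singleton.prod isClosed_univ)) ?_
    exact fun p ⟨hp, hpt, _⟩ => ⟨hpt, hp.1.1.2⟩

/-- Theorem 3 (finite-dimensional continuation): under closeness of `π_n` to the product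
flow `π` on `N = ℝ × B`, the maximal invariant set `A_{π_n}(N)` is a nonempty isolated
invariant set with nonempty compact `t`-slices, and some `ε`-neighborhood of it
(with `ε` depending only on `π₀`, `B`, `T` and `δ`) lies in `G^T_{π_n}(N)`. -/
theorem stmt9 {X : Type*} [MetricSpace X] [LocallyCompactSpace X]
    (π₀ : ℝ → X → X) (hπ₀ : IsFlow π₀) (B : Set X) (hBcpt : IsCompact B)
    (hB : IsStableIsolatingBlock π₀ B)
    (πn : ℕ → ℝ → ℝ × X → ℝ × X) (hflow : ∀ n, IsFlow (πn n))
    (hskew : ∀ n, IsSkewFlow (πn n)) (hss : SemiSingConv πn π₀)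
    (T δ : ℝ) (hT : 0 < T) (hδ : 0 < δ)
    (hcpt : IsCompact (closure (Metric.thickening δ B)))
    (h1 : Metric.thickening δ (Gset (prodFlow π₀) (2 * T) ((Set.univ : Set ℝ) ×ˢ B)) ⊆
      Gset (prodFlow π₀) T ((Set.univ : Set ℝ) ×ˢ B))
    (h2 : Metric.thickening δ (Gset (prodFlow π₀) T ((Set.univ : Set ℝ) ×ˢ B)) ⊆
      (Set.univ : Set ℝ) ×ˢ B)
    (h3 : Metric.thickening δ
        (Gset (prodFlow π₀) T (Metric.thickening δ ((Set.univ : Set ℝ) ×ˢ B))) ⊆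
      (Set.univ : Set ℝ) ×ˢ B) :
    ∃ ε > (0:ℝ), ∀ n : ℕ,
      GammaSet (πn n) T ((Set.univ : Set ℝ) ×ˢ B) = ∅ →
      (Gset (πn n) T ((Set.univ : Set ℝ) ×ˢ B)).Nonempty →
      (∀ z ∈ (Set.univ : Set ℝ) ×ˢ closure (Metric.thickening δ B),
        ∀ t ∈ Set.Icc (-T) T, dist (πn n t z) (prodFlow π₀ t z) < δ / 3) →
      (Ainv (πn n) ((Set.univ : Set ℝ) ×ˢ B)).Nonempty ∧
      Ainv (πn n) ((Set.univ : Set ℝ) ×ˢ B) ⊆ interior ((Set.univ : Set ℝ) ×ˢ B) ∧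
      Ainv (πn n) ((Set.univ : Set ℝ) ×ˢ B) =
        Ainv (πn n) (Ainv (πn n) ((Set.univ : Set ℝ) ×ˢ B)) ∧
      (∀ t : ℝ,
        (Ainv (πn n) ((Set.univ : Set ℝ) ×ˢ B) ∩ ({t} : Set ℝ) ×ˢ (Set.univ : Set X)).Nonempty ∧
        IsCompact (Ainv (πn n) ((Set.univ : Set ℝ) ×ˢ B) ∩ ({t} : Set ℝ) ×ˢ (Set.univ : Set X))) ∧
      Metric.thickening ε (Ainv (πn n) ((Set.univ : Set ℝ) ×ˢ B)) ⊆
        Gset (πn n) T ((Set.univ : Set ℝ) ×ˢ B) :=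
  stmt9_general π₀ hπ₀ B hBcpt hB πn hflow hskew T δ hT hδ hcpt h1 h3
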